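/- For β > −8π, the function Ψ(x) = (2/β) ln(1 + (β/(8π))(1 − |x|²/R²)) on the disk of radius R centered at the origin satisfies −ΔΨ = (1/Z) e^{−βΨ} with Z = πR²/(1 + β/(8π)), and Ψ = 0 on the boundary |x| = R. -/

import Mathlib

open Real Set

noncomputable def lap2 (f : ℝ × ℝ → ℝ) (p : ℝ × ℝ) : ℝ :=
  deriv (fun t => deriv (fun s => f (s, p.2)) t) p.1 +
  deriv (fun t => deriv (fun s => f (p.1, s)) t) p.2

/-!
With `c = β / 8π`, the function inside the logarithm is `u = (1 + c) - (c / R²) |x|²`, and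
`Δ log (a - b |x|²) = -4ab / (a - b |x|²)²` in the plane. Hence `-ΔΨ = (1 + c) / (π R² u²)`,
while `e^{-βΨ} = u⁻²`; on the boundary `u = 1`, so `Ψ = 0`.
-/

lemma hasDerivAt_log_sub_mul_sq {a b t : ℝ} (ht : a - b * t ^ 2 ≠ 0) :
    HasDerivAt (fun s => log (a - b * s ^ 2)) (-2 * b * t / (a - b * t ^ 2)) t := by
  have h := ((hasDerivAt_pow 2 t).const_mul b).const_sub a |>.log ht
  convert h using 1
  ring

lemma deriv_deriv_log_sub_mul_sq {a b t : ℝ} (ht : a - b * t ^ 2 ≠ 0) :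
    deriv (fun τ => deriv (fun s => log (a - b * s ^ 2)) τ) t
      = -2 * b * (a + b * t ^ 2) / (a - b * t ^ 2) ^ 2 := by
  have hopen : IsOpen {τ : ℝ | a - b * τ ^ 2 ≠ 0} :=
    isOpen_ne_fun (by fun_prop) continuous_const
  have hfirst : (fun τ => deriv (fun s => log (a - b * s ^ 2)) τ)
      =ᶠ[nhds t] fun τ => -2 * b * τ / (a - b * τ ^ 2) := by
    filter_upwards [hopen.mem_nhds ht] with τ hτ
    exact (hasDerivAt_log_sub_mul_sq hτ).deriv
  have hsecond := ((hasDerivAt_id' t).const_mul (-2 * b)).fun_div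
    (((hasDerivAt_pow 2 t).const_mul b).const_sub a) ht
  rw [hfirst.deriv_eq, hsecond.deriv]
  field_simp
  ring

lemma lap2_const_mul (k : ℝ) (f : ℝ × ℝ → ℝ) (p : ℝ × ℝ) :
    lap2 (fun x => k * f x) p = k * lap2 f p := by
  simp only [lap2, deriv_const_mul_field', mul_add]

lemma lap2_log_sub_mul_normSq {a b : ℝ} {p : ℝ × ℝ} (hp : a - b * (p.1 ^ 2 + p.2 ^ 2) ≠ 0) :
    lap2 (fun x => log (a - b * (x.1 ^ 2 + x.2 ^ 2))) p
      = -4 * a * b / (a - b * (p.1 ^ 2 + p.2 ^ 2)) ^ 2 := by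
  have h₁ : (fun s => log (a - b * (s ^ 2 + p.2 ^ 2)))
      = fun s => log ((a - b * p.2 ^ 2) - b * s ^ 2) := by
    funext s; congr 1; ring
  have h₂ : (fun s => log (a - b * (p.1 ^ 2 + s ^ 2)))
      = fun s => log ((a - b * p.1 ^ 2) - b * s ^ 2) := by
    funext s; congr 1; ring
  have hp₁ : (a - b * p.2 ^ 2) - b * p.1 ^ 2 ≠ 0 := by convert hp using 1; ring
  have hp₂ : (a - b * p.1 ^ 2) - b * p.2 ^ 2 ≠ 0 := by convert hp using 1; ring
  simp only [lap2]
  rw [h₁, h₂, deriv_deriv_log_sub_mul_sq hp₁, deriv_deriv_log_sub_mul_sq hp₂]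
  field_simp
  ring

/-- The explicit radial stream function on the disk of radius R solves the
mean-field equation −ΔΨ = (1/Z)e^{−βΨ} with Z = πR²/(1+β/8π), and vanishes
on the boundary. -/
theorem disk_meanField_solution (R β : ℝ) (hR : 0 < R)
    (hβ : -8 * π < β) (hβ0 : β ≠ 0)
    (Ψ : ℝ × ℝ → ℝ)
    (hΨ : ∀ x : ℝ × ℝ,
      Ψ x = (2 / β) * Real.log (1 + (β / (8 * π)) * (1 - (x.1 ^ 2 + x.2 ^ 2) / R ^ 2)))
    (Z : ℝ) (hZ : Z = π * R ^ 2 / (1 + β / (8 * π))) :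
    (∀ x : ℝ × ℝ, x.1 ^ 2 + x.2 ^ 2 < R ^ 2 →
      - lap2 Ψ x = (1 / Z) * Real.exp (-β * Ψ x)) ∧
    (∀ x : ℝ × ℝ, x.1 ^ 2 + x.2 ^ 2 = R ^ 2 → Ψ x = 0) := by
  set c := β / (8 * π) with hc
  have hc₁ : 0 < 1 + c := by
    have : -1 < c := by rw [hc, lt_div_iff₀ (by positivity)]; linarith
    linarith
  have hΨ' : Ψ = fun x => 2 / β * log ((1 + c) - c / R ^ 2 * (x.1 ^ 2 + x.2 ^ 2)) := by
    funext x; rw [hΨ]; congr 2; field_simp; ring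
  refine ⟨fun x hx => ?_, fun x hx => by rw [hΨ, hx, div_self (by positivity)]; simp⟩
  set ρ := (x.1 ^ 2 + x.2 ^ 2) / R ^ 2 with hρ
  set u := (1 + c) - c / R ^ 2 * (x.1 ^ 2 + x.2 ^ 2) with hu_def
  have hρ₁ : ρ < 1 := (div_lt_one (by positivity)).mpr hx
  -- `u` is a convex combination of `1 + c > 0` and `1`
  have hu : 0 < u := by
    rw [show u = (1 - ρ) * (1 + c) + ρ by rw [hu_def, hρ]; ring]
    exact add_pos_of_pos_of_nonneg (mul_pos (sub_pos.mpr hρ₁) hc₁) (by positivity)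
  have hΨx : Ψ x = 2 / β * log u := by rw [hΨ']
  have hβΨ : -β * Ψ x = -log (u ^ 2) := by
    rw [hΨx, log_pow, Nat.cast_ofNat]
    field_simp
  have hexp : exp (-β * Ψ x) = (u ^ 2)⁻¹ := by
    rw [hβΨ, exp_neg, exp_log (by positivity)]
  have hβc : β = 8 * π * c := by rw [hc]; field_simp
  have hc₀ : c ≠ 0 := div_ne_zero hβ0 (by positivity)
  rw [hexp, hΨ', lap2_const_mul, lap2_log_sub_mul_normSq hu.ne', ← hu_def, hZ, hβc]
  field_simp
  ring
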